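/- Hilbert-space Schröder–Bernstein: if H and H' are Hilbert spaces and each is isometrically isomorphic (via a linear isometry) to a closed subspace of the other, then H and H' are isometrically isomorphic. -/
import Mathlib

open Cardinal Set

local notation "⟪" x ", " y "⟫" => @inner ℂ _ _ x y

/-- Key lemma: an orthonormal family has cardinality at most that of a Hilbert basis. -/
lemma orthonormal_card_le_hilbertBasis {E : Type w} [NormedAddCommGroup E]
    [InnerProductSpace ℂ E] {ι : Type u} {ι' : Type v}
    (b : HilbertBasis ι ℂ E) {v : ι' → E} (hv : Orthonormal ℂ v) :
    Cardinal.lift.{u} #ι' ≤ Cardinal.lift.{v} #ι := by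
  by_cases hfin : Finite ι
  · -- finite-dimensional case: via linear independence and finrank
    cases nonempty_fintype ι
    have : Module.Finite ℂ E := Module.Finite.of_basis b.toOrthonormalBasis.toBasis
    have h1 : #ι' ≤ (Module.finrank ℂ E : Cardinal) :=
      hv.linearIndependent.cardinalMk_le_finrank
    have h2 : Module.finrank ℂ E = Fintype.card ι :=
      Module.finrank_eq_card_basis b.toOrthonormalBasis.toBasis
    rw [h2] at h1
    have h3 : Cardinal.lift.{u} #ι' ≤ (Fintype.card ι : Cardinal) := by
      simpa [Cardinal.lift_natCast] using Cardinal.lift_le.{u}.2 h1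
    simpa [Cardinal.mk_fintype, Cardinal.lift_natCast] using h3
  · have hinf : Infinite ι := not_finite_iff_infinite.mp hfin
    -- each orthonormal vector has a nonzero coefficient against the basis
    set Tset : ι → Set ι' := fun i => {i' | b.repr (v i') i ≠ 0} with hT
    have hcover : ⋃ i, Tset i = Set.univ := by
      rw [Set.iUnion_eq_univ_iff]
      intro i'
      by_contra h
      push_neg at h
      have h0 : b.repr (v i') = 0 := by
        ext i
        have h' := h i
        rw [hT] at h'
        simpa using h' 
      have : v i' = 0 := by
        have := congrArg b.repr.symm h0
        simpa using this
      exact hv.ne_zero i' this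
    have hcount : ∀ i, (Tset i).Countable := by
      intro i
      have hs : Summable fun i' => ‖⟪v i', b i⟫‖ ^ 2 :=
        hv.inner_products_summable (b i)
      refine hs.countable_support.mono ?_
      intro i' hi'
      have hi'' : b.repr (v i') i ≠ 0 := hi'
      rw [Function.mem_support]
      intro hz
      have hinner : ⟪v i', b i⟫ = 0 := by simpa using hz
      apply hi''
      rw [b.repr_apply_apply, ← inner_conj_symm, hinner]
      simp
    have key : Cardinal.lift.{u} #(⋃ i, Tset i) ≤
        Cardinal.lift.{v} #ι * ⨆ i, Cardinal.lift.{u} #(Tset i) :=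
      Cardinal.mk_iUnion_le_lift Tset
    have hsup : (⨆ i, Cardinal.lift.{u} #(Tset i)) ≤ ℵ₀ := by
      refine ciSup_le' fun i => ?_
      have := (hcount i).le_aleph0
      calc Cardinal.lift.{u} #(Tset i) ≤ Cardinal.lift.{u} ℵ₀ :=
            Cardinal.lift_le.2 this
        _ = ℵ₀ := Cardinal.lift_aleph0
    have haleph : ℵ₀ ≤ Cardinal.lift.{v} #ι :=
      Cardinal.aleph0_le_lift.2 (Cardinal.aleph0_le_mk ι)
    calc Cardinal.lift.{u} #ι' = Cardinal.lift.{u} #(⋃ i, Tset i) := by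
          rw [hcover, Cardinal.mk_univ]
      _ ≤ Cardinal.lift.{v} #ι * ⨆ i, Cardinal.lift.{u} #(Tset i) := key
      _ ≤ Cardinal.lift.{v} #ι * ℵ₀ := mul_le_mul_right hsup _
      _ = Cardinal.lift.{v} #ι := Cardinal.mul_aleph0_eq haleph

theorem hilbert_schroeder_bernstein {H H' : Type*} [NormedAddCommGroup H]
    [InnerProductSpace ℂ H] [CompleteSpace H] [NormedAddCommGroup H']
    [InnerProductSpace ℂ H'] [CompleteSpace H']
    (T : H →ₗᵢ[ℂ] H') (S : H' →ₗᵢ[ℂ] H) :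
    Nonempty (H ≃ₗᵢ[ℂ] H') := by
  obtain ⟨w, b, -⟩ := exists_hilbertBasis ℂ H
  obtain ⟨w', b', -⟩ := exists_hilbertBasis ℂ H'
  have h1 : Orthonormal ℂ (T ∘ b) := b.orthonormal.comp_linearIsometry T
  have h2 : Orthonormal ℂ (S ∘ b') := b'.orthonormal.comp_linearIsometry S
  have c1 := orthonormal_card_le_hilbertBasis b' h1
  have c2 := orthonormal_card_le_hilbertBasis b h2
  obtain ⟨e⟩ : Nonempty (w ≃ w') := Cardinal.lift_mk_eq'.1 (le_antisymm c1 c2)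
  have hON : Orthonormal ℂ (⇑b ∘ ⇑e.symm) := b.orthonormal.comp _ e.symm.injective
  have hsp : ⊤ ≤ (Submodule.span ℂ (Set.range (⇑b ∘ ⇑e.symm))).topologicalClosure := by
    have : Set.range (⇑b ∘ ⇑e.symm) = Set.range ⇑b := by
      rw [Set.range_comp, e.symm.range_eq_univ, Set.image_univ]
    rw [this, b.dense_span]
  exact ⟨(HilbertBasis.mk hON hsp).repr.trans b'.repr.symm⟩
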